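/- arXiv:1510.06573 — 2 statements merged into one kernel-verified Lean document; each statement's English description precedes it below -/
import Mathlib

section
/- Let s be a nonzero complex number with s^4 ≠ 1, and let D : ℕ → ℂ satisfy D(1) = 1, D(2) = s − s^{−1}, and D(n+1) = (s − s^{−1})·D(n) + D(n−1) for all n ≥ 2. Then for every natural number m, the odd-index terms satisfy D(2m+1) = [m+1]_{s²} − [m]_{s²}, where [n]_q = (q^n − q^{−n})/(q − q^{−1}) is the bosonic q-number with q = s². -/
/-- Bosonic q-number `[n]_q = (q^n - q^{-n})/(q - q⁻¹)`. -/
noncomputable def qNum (q : ℂ) (n : ℕ) : ℂ := (q ^ n - q⁻¹ ^ n) / (q - q⁻¹)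

/-! The recurrence is that of the Lucas sequence with roots `s` and `-s⁻¹` (sum `s - s⁻¹`,
product `-1`), so `D n = (s ^ n - (-s⁻¹) ^ n) / (s + s⁻¹)`. For odd `n` this is
`(s ^ n + s⁻¹ ^ n) / (s + s⁻¹)`, and the same quotient is `[m+1]_q - [m]_q` for `q = s²`
because `q - q⁻¹ = (s - s⁻¹)(s + s⁻¹)`. -/

/-- Binet's formula for a Lucas sequence, multiplied out so that it also covers `a = b`. -/
theorem lucas_mul_sub_eq_pow_sub_pow {K : Type*} [Field K] (a b : K) (u : ℕ → K)
    (h1 : u 1 = 1) (h2 : u 2 = a + b)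
    (hrec : ∀ n, 2 ≤ n → u (n + 1) = (a + b) * u n - a * b * u (n - 1)) (n : ℕ) :
    u (n + 1) * (a - b) = a ^ (n + 1) - b ^ (n + 1) := by
  suffices h : u (n + 1) * (a - b) = a ^ (n + 1) - b ^ (n + 1) ∧
      u (n + 2) * (a - b) = a ^ (n + 2) - b ^ (n + 2) from h.1
  induction n with
  | zero => constructor <;> simp only [h1, h2] <;> ring
  | succ k ih =>
    refine ⟨ih.2, ?_⟩
    rw [hrec (k + 2) (by omega), show k + 2 - 1 = k + 1 from rfl]
    linear_combination (a + b) * ih.2 - a * b * ih.1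

theorem sub_inv_ne_zero_and_add_inv_ne_zero {s : ℂ} (hs : s ≠ 0) (hs4 : s ^ 4 ≠ 1) :
    s - s⁻¹ ≠ 0 ∧ s + s⁻¹ ≠ 0 := by
  have h : (s - s⁻¹) * (s + s⁻¹) * s ^ 2 = s ^ 4 - 1 := by field_simp; ring
  rw [← mul_ne_zero_iff, ← mul_ne_zero_iff_right (pow_ne_zero 2 hs), h]
  exact sub_ne_zero.mpr hs4

theorem qNum_sq_succ_sub_qNum_sq {s : ℂ} (hs : s - s⁻¹ ≠ 0) (m : ℕ) :
    qNum (s ^ 2) (m + 1) - qNum (s ^ 2) m = (s ^ (2 * m + 1) + s⁻¹ ^ (2 * m + 1)) / (s + s⁻¹) := by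
  have hx : s * s⁻¹ = 1 := mul_inv_cancel₀ (by rintro rfl; simp at hs)
  have hnum : (s ^ 2) ^ (m + 1) - (s ^ 2)⁻¹ ^ (m + 1) - ((s ^ 2) ^ m - (s ^ 2)⁻¹ ^ m) =
      (s - s⁻¹) * (s ^ (2 * m + 1) + s⁻¹ ^ (2 * m + 1)) := by
    rw [← inv_pow]
    linear_combination (s ^ (2 * m) - s⁻¹ ^ (2 * m)) * hx
  have hden : s ^ 2 - (s ^ 2)⁻¹ = (s - s⁻¹) * (s + s⁻¹) := by
    rw [← inv_pow]
    ring
  rw [qNum, qNum, ← sub_div, hnum, hden, mul_div_mul_left _ _ hs]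

theorem alexander_odd_terms (s : ℂ) (hs : s ≠ 0) (hs4 : s ^ 4 ≠ 1) (D : ℕ → ℂ)
    (hD1 : D 1 = 1) (hD2 : D 2 = s - s⁻¹)
    (hDrec : ∀ n : ℕ, 2 ≤ n → D (n + 1) = (s - s⁻¹) * D n + D (n - 1)) :
    ∀ m : ℕ, D (2 * m + 1) = qNum (s ^ 2) (m + 1) - qNum (s ^ 2) m := by
  intro m
  obtain ⟨hsub, hadd⟩ := sub_inv_ne_zero_and_add_inv_ne_zero hs hs4
  have hbinet := lucas_mul_sub_eq_pow_sub_pow s (-s⁻¹) D hD1 (by rw [hD2]; ring)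
    (fun n hn => by rw [hDrec n hn]; field_simp; ring) (2 * m)
  have hodd : (-s⁻¹) ^ (2 * m + 1) = -s⁻¹ ^ (2 * m + 1) := Odd.neg_pow ⟨m, rfl⟩ _
  rw [qNum_sq_succ_sub_qNum_sq hsub, eq_div_iff hadd]
  linear_combination hbinet - hodd
end

section
/- Let q, p be complex numbers with q ≠ p, and let A : ℕ → ℂ be a sequence indexed by m with A(0) = 1, A(1) = q − q·p + p, and A(m+2) = (q + p)·A(m+1) − q·p·A(m) for all m ≥ 0 (so A(m) represents the generalized Alexander polynomial A_{2m+1,2}(q,p) of the torus knot T(2m+1,2)). Then for every natural number m, A(m) = [m+1]_{q,p} − q·p·[m]_{q,p}. -/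
/-- The q,p-number `[n]_{q,p} = (q^n - p^n)/(q - p)`. -/
noncomputable def qpNum (q p : ℂ) (n : ℕ) : ℂ := (q ^ n - p ^ n) / (q - p)

theorem generalized_alexander_from_qpNumbers (q p : ℂ) (hqp : q ≠ p) (A : ℕ → ℂ)
    (hA0 : A 0 = 1) (hA1 : A 1 = q - q * p + p)
    (hArec : ∀ m : ℕ, A (m + 2) = (q + p) * A (m + 1) - q * p * A m) :
    ∀ m : ℕ, A m = qpNum q p (m + 1) - q * p * qpNum q p m := by
  have hne : q - p ≠ 0 := sub_ne_zero.mpr hqp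
  intro m
  induction m using Nat.twoStepInduction with
  | zero => simp [hA0, qpNum]; field_simp
  | one => simp [hA1, qpNum]; field_simp; ring
  | more n ih1 ih2 =>
    rw [hArec, ih1, ih2]
    simp only [qpNum]
    field_simp
    ring
end
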